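/- Let A be an idempotented algebra and e ∈ A a left special idempotent. Then the functor Hom_A(Ae, −) : M(A)_e → M(eAe) is an equivalence of categories, with quasi-inverse A ⊗_{eAe} (−). -/

import Mathlib

open scoped TensorProduct

set_option linter.unusedSectionVars false

universe u

section Setup

variable (K : Type u) [CommRing K]
variable (A : Type u) [NonUnitalRing A] [Module K A]
  [SMulCommClass K A A] [IsScalarTower K A A]

/-- A (not necessarily non-degenerate) left module over the non-unital `K`-algebra `A`:
an abelian group with compatible `K`- and `A`-actions, the `A`-action being `K`-bilinear. -/
class NUMod (M : Type u) [AddCommGroup M] [Module K M] extends SMul A M where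
  asmul_add : ∀ (a : A) (m n : M), a • (m + n) = a • m + a • n
  add_asmul : ∀ (a b : A) (m : M), (a + b) • m = a • m + b • m
  mul_asmul : ∀ (a b : A) (m : M), (a * b) • m = a • (b • m)
  asmul_ksmul : ∀ (k : K) (a : A) (m : M), a • (k • m) = k • (a • m)
  ksmul_asmul : ∀ (k : K) (a : A) (m : M), (k • a) • m = k • (a • m)

/-- `A` is an idempotented algebra. -/
def Idempotented : Prop :=
  (∀ a : A, ∃ e : A, e * e = e ∧ e * a = a ∧ a * e = a) ∧
  ∀ e₁ e₂ : A, e₁ * e₁ = e₁ → e₂ * e₂ = e₂ →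
    ∃ e : A, e * e = e ∧ e * e₁ = e₁ ∧ e₁ * e = e₁ ∧ e * e₂ = e₂ ∧ e₂ * e = e₂

/-- A module is non-degenerate if every element is fixed by some idempotent of `A`. -/
def Nondeg (M : Type u) [AddCommGroup M] [Module K M] [NUMod K A M] : Prop :=
  ∀ m : M, ∃ e : A, e * e = e ∧ e • m = m

/-- A `K`-submodule which is stable under the `A`-action, i.e. an `A`-submodule. -/
def AStable {M : Type u} [AddCommGroup M] [Module K M] [NUMod K A M]
    (S : Submodule K M) : Prop :=
  ∀ a : A, ∀ m ∈ S, a • m ∈ S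

/-- `A`-linearity of a `K`-linear map between `A`-modules. -/
def IsAMap {M N : Type u} [AddCommGroup M] [Module K M] [NUMod K A M]
    [AddCommGroup N] [Module K N] [NUMod K A N] (f : M →ₗ[K] N) : Prop :=
  ∀ (a : A) (m : M), f (a • m) = a • f m

theorem asmul_zero {M : Type u} [AddCommGroup M] [Module K M] [NUMod K A M] (a : A) :
    a • (0 : M) = 0 := by
  have h := NUMod.asmul_add (K := K) (A := A) a (0 : M) 0
  rw [add_zero] at h
  exact add_left_cancel (show a • (0 : M) + a • (0 : M) = a • (0 : M) + 0 by
    rw [add_zero]; exact h.symm)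

variable {A}

/-- The subset `eM = {e m : m ∈ M}` of a module `M`, as a `K`-submodule. -/
def eSub (e : A) (M : Type u) [AddCommGroup M] [Module K M] [NUMod K A M] :
    Submodule K M where
  carrier := {m : M | ∃ n : M, e • n = m}
  zero_mem' := ⟨0, asmul_zero K A e⟩
  add_mem' := by
    rintro x y ⟨m, rfl⟩ ⟨n, rfl⟩
    exact ⟨m + n, NUMod.asmul_add e m n⟩
  smul_mem' := by
    rintro k x ⟨m, rfl⟩
    exact ⟨k • m, NUMod.asmul_ksmul k e m⟩

/-- The submodule `AeM` of `M` generated by the elements `a • (e • m)`. -/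
def aeSpan (e : A) (M : Type u) [AddCommGroup M] [Module K M] [NUMod K A M] :
    Submodule K M :=
  Submodule.span K {x : M | ∃ (a : A) (m : M), a • (e • m) = x}

/-- The left ideal `Ae = {a e : a ∈ A}` (for an idempotent `e`), as a `K`-submodule of `A`. -/
def leftIdeal (e : A) : Submodule K A where
  carrier := {x : A | ∃ a : A, a * e = x}
  zero_mem' := ⟨0, zero_mul e⟩
  add_mem' := by
    rintro x y ⟨a, rfl⟩ ⟨b, rfl⟩
    exact ⟨a + b, add_mul a b e⟩
  smul_mem' := by
    rintro k x ⟨a, rfl⟩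
    exact ⟨k • a, smul_mul_assoc k a e⟩

/-- The right ideal `eA = {e a : a ∈ A}` (for an idempotent `e`), as a `K`-submodule of `A`. -/
def rightIdeal (e : A) : Submodule K A where
  carrier := {x : A | ∃ a : A, e * a = x}
  zero_mem' := ⟨0, mul_zero e⟩
  add_mem' := by
    rintro x y ⟨a, rfl⟩ ⟨b, rfl⟩
    exact ⟨a + b, mul_add e a b⟩
  smul_mem' := by
    rintro k x ⟨a, rfl⟩
    exact ⟨k • a, mul_smul_comm k e a⟩

/-- The `A`-balancing relations inside `eA ⊗_K M`, whose quotient is `eA ⊗_A M`. -/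
def brel (e : A) (M : Type u) [AddCommGroup M] [Module K M] [NUMod K A M] :
    Submodule K (↥(rightIdeal K e) ⊗[K] M) :=
  Submodule.span K {z : ↥(rightIdeal K e) ⊗[K] M |
    ∃ (x y : ↥(rightIdeal K e)) (a : A) (m : M),
      (y : A) = (x : A) * a ∧ z = y ⊗ₜ[K] m - x ⊗ₜ[K] (a • m)}

/-- The `A`-balancing relations inside `eA ⊗_K S` for a `K`-submodule `S ≤ M`. -/
def brelSub (e : A) {M : Type u} [AddCommGroup M] [Module K M] [NUMod K A M]
    (S : Submodule K M) : Submodule K (↥(rightIdeal K e) ⊗[K] ↥S) :=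
  Submodule.span K {z : ↥(rightIdeal K e) ⊗[K] ↥S |
    ∃ (x y : ↥(rightIdeal K e)) (a : A) (m m' : ↥S),
      (y : A) = (x : A) * a ∧ (m' : M) = a • (m : M) ∧ z = y ⊗ₜ[K] m - x ⊗ₜ[K] m'}

variable (A)

/-- An idempotent `e` is left special if the class of non-degenerate modules `M` with
`M = AeM` is closed under subquotients: for `A`-stable submodules `Ksub ≤ H` of such an
`M`, the subquotient `H/Ksub` is again generated by its `e`-fixed vectors. -/
def LeftSpecial (e : A) : Prop :=
  ∀ (X : Type u) [AddCommGroup X] [Module K X] [NUMod K A X],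
    Nondeg K A X → aeSpan K e X = ⊤ →
    ∀ Ksub H : Submodule K X, AStable K A Ksub → AStable K A H → Ksub ≤ H →
      H ≤ Ksub ⊔ Submodule.span K {x : X | ∃ a : A, ∃ m ∈ H, a • (e • m) = x}

end Setup

section Corner

variable {K : Type u} [CommRing K]
variable {A : Type u} [NonUnitalRing A] [Module K A]
  [SMulCommClass K A A] [IsScalarTower K A A]

/-- The corner `eAe` of `A` at an idempotent `e`, as a non-unital subring of `A`
(it is in fact a unital ring with identity `e`). -/
def corner (e : A) (he : e * e = e) : NonUnitalSubring A where
  carrier := {x : A | e * x * e = x}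
  zero_mem' := by simp
  add_mem' := by
    intro x y hx hy
    simp only [Set.mem_setOf_eq] at *
    rw [mul_add, add_mul, hx, hy]
  neg_mem' := by
    intro x hx
    simp only [Set.mem_setOf_eq] at *
    rw [mul_neg, neg_mul, hx]
  mul_mem' := by
    intro x y hx hy
    simp only [Set.mem_setOf_eq] at *
    have hex : e * x = x := by
      conv_lhs => rw [← hx]
      rw [← mul_assoc, ← mul_assoc, he, hx]
    have hye : y * e = y := by
      conv_lhs => rw [← hy]
      rw [mul_assoc, mul_assoc, he, ← mul_assoc, hy]
    rw [← mul_assoc e x y, hex, mul_assoc, hye]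

theorem e_mem_corner (e : A) (he : e * e = e) : e ∈ corner e he := by
  show e * e * e = e
  rw [he, he]

end Corner

/-- A bundled left `A`-module. -/
structure ModBundle (K A : Type u) [CommRing K] [NonUnitalRing A] [Module K A] where
  carrier : Type u
  [addCommGroup : AddCommGroup carrier]
  [module : Module K carrier]
  [numod : NUMod K A carrier]

attribute [instance] ModBundle.addCommGroup ModBundle.module ModBundle.numod

/-!
Full faithfulness: an `eAe`-linear `g : eM → eN` extends to `M = AeM` by taking as graph of
the extension the `A`-submodule `H ⊆ M × N` generated by the graph of `g`. Its first projection
is onto because `M = AeM`. It is injective because `e H` lies in the graph of `g`, so the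
`A`-stable subquotient `H ∩ (0 × N)` of `M × N ∈ M(A)_e` is killed by `e`; by left speciality
it is then generated by `A e (H ∩ (0 × N)) = 0`.

Essential surjectivity: an `eAe`-module `V` is `e (A ⊗_{eAe} V) ≅ eA ⊗_{eAe} V ≅ V`, and
`A ⊗_{eAe} V` lies in `M(A)_e` because `A` is idempotented.
-/

theorem Submodule.exists_linearMap_mem_iff {R E F : Type*} [Ring R] [AddCommGroup E]
    [Module R E] [AddCommGroup F] [Module R F] (H : Submodule R (E × F))
    (hfst : H.map (LinearMap.fst R E F) = ⊤) (hsnd : ∀ z ∈ H, z.1 = 0 → z.2 = 0) :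
    ∃ f : E →ₗ[R] F, ∀ x y, (x, y) ∈ H ↔ f x = y := by
  let dom := LinearEquiv.ofTop _ hfst
  refine ⟨H.toLinearPMap.toFun ∘ₗ dom.symm.toLinearMap, fun x y => ?_⟩
  have hx : x ∈ H.map (LinearMap.fst R E F) := hfst ▸ Submodule.mem_top
  have hmem : (x, H.toLinearPMap (dom.symm x)) ∈ H := by
    simpa [dom] using H.mem_graph_toLinearPMap hsnd (dom.symm x)
  exact ⟨fun hy => (Submodule.existsUnique_from_graph (fun hz => hsnd _ hz) hx).unique hmem hy,
    fun hy => hy ▸ hmem⟩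

section CornerAlgebra

variable {A : Type u} [NonUnitalRing A] {e : A}

theorem mul_mul_mem_corner (he : e * e = e) (a : A) : e * a * e ∈ corner e he := by
  show e * (e * a * e) * e = e * a * e
  rw [← mul_assoc, ← mul_assoc, he, mul_assoc _ e e, he]

theorem idem_mul_of_mem_corner (he : e * e = e) {c : A} (hc : c ∈ corner e he) : e * c = c := by
  have hc' : e * c * e = c := hc
  rw [← hc', ← mul_assoc, ← mul_assoc, he]

theorem mul_idem_of_mem_corner (he : e * e = e) {c : A} (hc : c ∈ corner e he) : c * e = c := by
  have hc' : e * c * e = c := hc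
  rw [← hc', mul_assoc, he]

def toCorner (he : e * e = e) (a : A) : corner e he :=
  ⟨e * a * e, mul_mul_mem_corner he a⟩

theorem toCorner_add (he : e * e = e) (a b : A) :
    toCorner he (a + b) = toCorner he a + toCorner he b :=
  Subtype.ext (show e * (a + b) * e = e * a * e + e * b * e by rw [mul_add, add_mul])

end CornerAlgebra

section Modules

variable {K : Type u} [CommRing K] {A : Type u} [NonUnitalRing A] [Module K A]
  [SMulCommClass K A A] [IsScalarTower K A A]
variable {M N : Type u} [AddCommGroup M] [Module K M] [NUMod K A M]
  [AddCommGroup N] [Module K N] [NUMod K A N]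
variable {e : A}

variable (K M) in
def NUMod.toLinearMap (a : A) : M →ₗ[K] M where
  toFun m := a • m
  map_add' := NUMod.asmul_add a
  map_smul' k m := NUMod.asmul_ksmul k a m

theorem mul_mem_leftIdeal {x : A} (a : A) (hx : x ∈ leftIdeal K e) :
    a * x ∈ leftIdeal K e := by
  obtain ⟨b, rfl⟩ := hx
  exact ⟨a * b, mul_assoc a b e⟩

theorem mul_mem_leftIdeal_of_mem_corner {c : A} (he : e * e = e) (x : A)
    (hc : c ∈ corner e he) : x * c ∈ leftIdeal K e :=
  ⟨x * c, by rw [mul_assoc, mul_idem_of_mem_corner he hc]⟩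

theorem mul_idem_of_mem_leftIdeal {x : A} (he : e * e = e) (hx : x ∈ leftIdeal K e) :
    x * e = x := by
  obtain ⟨b, rfl⟩ := hx
  rw [mul_assoc, he]

theorem idem_smul_of_mem_eSub (he : e * e = e) {m : M} (hm : m ∈ eSub K e M) :
    e • m = m := by
  obtain ⟨n, rfl⟩ := hm
  rw [← NUMod.mul_asmul, he]

theorem idem_smul_smul_of_mem_eSub (he : e * e = e) {m : M} (hm : m ∈ eSub K e M)
    (a : A) : e • a • m = (e * a * e) • m := by
  rw [NUMod.mul_asmul, NUMod.mul_asmul, idem_smul_of_mem_eSub he hm]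

theorem AStable.span {S : Set M} (h : ∀ a : A, ∀ s ∈ S, a • s ∈ Submodule.span K S) :
    AStable K A (Submodule.span K S) := by
  intro a m hm
  induction hm using Submodule.span_induction with
  | mem x hx => exact h a x hx
  | zero => rw [asmul_zero K A]; exact Submodule.zero_mem _
  | add x y _ _ hx hy => rw [NUMod.asmul_add]; exact Submodule.add_mem _ hx hy
  | smul k x _ hx => rw [NUMod.asmul_ksmul]; exact Submodule.smul_mem _ k hx

theorem map_aeSpan_le {f : M →ₗ[K] N} (hf : IsAMap K A f) :
    (aeSpan K e M).map f ≤ aeSpan K e N := by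
  rw [aeSpan, Submodule.map_span]
  refine Submodule.span_mono ?_
  rintro _ ⟨_, ⟨a, m, rfl⟩, rfl⟩
  exact ⟨a, f m, by rw [hf, hf]⟩

variable (K) in
def idemFixed (hA : Idempotented A) (M : Type u) [AddCommGroup M] [Module K M]
    [NUMod K A M] : Submodule K M where
  carrier := {m | ∃ f : A, f * f = f ∧ f • m = m}
  zero_mem' := by
    obtain ⟨f, hf, -⟩ := hA.1 0
    exact ⟨f, hf, asmul_zero K A f⟩
  add_mem' := by
    rintro m n ⟨f₁, hf₁, hm⟩ ⟨f₂, hf₂, hn⟩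
    obtain ⟨f, hf, hff₁, -, hff₂, -⟩ := hA.2 f₁ f₂ hf₁ hf₂
    refine ⟨f, hf, ?_⟩
    rw [NUMod.asmul_add, ← hm, ← hn, ← NUMod.mul_asmul, ← NUMod.mul_asmul, hff₁, hff₂]
  smul_mem' := by
    rintro k m ⟨f, hf, hm⟩
    exact ⟨f, hf, by rw [NUMod.asmul_ksmul, hm]⟩

theorem nondeg_iff_idemFixed_eq_top (hA : Idempotented A) :
    Nondeg K A M ↔ idemFixed K hA M = ⊤ :=
  (Submodule.eq_top_iff' (p := idemFixed K hA M)).symm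

theorem map_idemFixed_le (hA : Idempotented A) {f : M →ₗ[K] N} (hf : IsAMap K A f) :
    (idemFixed K hA M).map f ≤ idemFixed K hA N := by
  rintro _ ⟨m, ⟨g, hg, hm⟩, rfl⟩
  exact ⟨g, hg, by rw [← hf, hm]⟩

theorem LeftSpecial.eq_bot_of_forall_smul_eq_zero (hsp : LeftSpecial K A e)
    (hM : Nondeg K A M) (hMe : aeSpan K e M = ⊤) {S : Submodule K M} (hS : AStable K A S)
    (hSe : ∀ x ∈ S, e • x = 0) : S = ⊥ := by
  have hbot : AStable K A (⊥ : Submodule K M) := by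
    rintro a _ rfl
    exact asmul_zero K A a
  have h := hsp M hM hMe ⊥ S hbot hS bot_le
  rw [bot_sup_eq] at h
  refine eq_bot_iff.2 (h.trans (Submodule.span_le.2 ?_))
  rintro _ ⟨a, m, hm, rfl⟩
  rw [SetLike.mem_coe, hSe m hm, asmul_zero K A a]
  exact Submodule.zero_mem _

theorem IsAMap.ext_of_aeSpan_eq_top (hM : aeSpan K e M = ⊤) {f f' : M →ₗ[K] N}
    (hf : IsAMap K A f) (hf' : IsAMap K A f') (h : ∀ x ∈ eSub K e M, f x = f' x) : f = f' := by
  refine LinearMap.ext_on hM ?_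
  rintro _ ⟨a, m, rfl⟩
  rw [hf, hf', h _ ⟨m, rfl⟩]

instance NUMod.prod : NUMod K A (M × N) where
  asmul_add a m n := Prod.ext (NUMod.asmul_add a m.1 n.1) (NUMod.asmul_add a m.2 n.2)
  add_asmul a b m := Prod.ext (NUMod.add_asmul a b m.1) (NUMod.add_asmul a b m.2)
  mul_asmul a b m := Prod.ext (NUMod.mul_asmul a b m.1) (NUMod.mul_asmul a b m.2)
  asmul_ksmul k a m := Prod.ext (NUMod.asmul_ksmul k a m.1) (NUMod.asmul_ksmul k a m.2)
  ksmul_asmul k a m := Prod.ext (NUMod.ksmul_asmul k a m.1) (NUMod.ksmul_asmul k a m.2)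

theorem isAMap_inl : IsAMap K A (LinearMap.inl K M N) := fun a _ =>
  Prod.ext rfl (asmul_zero K A a).symm

theorem isAMap_inr : IsAMap K A (LinearMap.inr K M N) := fun a _ =>
  Prod.ext (asmul_zero K A a).symm rfl

theorem nondeg_prod (hA : Idempotented A) (hM : Nondeg K A M) (hN : Nondeg K A N) :
    Nondeg K A (M × N) := by
  rw [nondeg_iff_idemFixed_eq_top hA] at *
  rw [eq_top_iff, ← Submodule.prod_top, ← hM, ← hN, LinearMap.prod_eq_sup_map]
  exact sup_le (map_idemFixed_le hA isAMap_inl) (map_idemFixed_le hA isAMap_inr)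

theorem aeSpan_prod (hM : aeSpan K e M = ⊤) (hN : aeSpan K e N = ⊤) :
    aeSpan K e (M × N) = ⊤ := by
  rw [eq_top_iff, ← Submodule.prod_top, ← hM, ← hN, LinearMap.prod_eq_sup_map]
  exact sup_le (map_aeSpan_le isAMap_inl) (map_aeSpan_le isAMap_inr)

variable (K M e) in
def eProj : M →ₗ[K] eSub K e M :=
  (NUMod.toLinearMap K M e).codRestrict (eSub K e M) fun m => ⟨m, rfl⟩

def graphSpan (g : eSub K e M →ₗ[K] eSub K e N) : Submodule K (M × N) :=
  Submodule.span K {z | ∃ (a : A) (x : eSub K e M), z = a • ((x : M), (g x : N))}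

variable {g : eSub K e M →ₗ[K] eSub K e N}

theorem aStable_graphSpan : AStable K A (graphSpan g) := by
  refine AStable.span fun a _ ⟨b, x, hz⟩ => Submodule.subset_span ⟨a * b, x, ?_⟩
  rw [hz]
  exact (NUMod.mul_asmul (K := K) (M := M × N) a b _).symm

theorem mk_mem_graphSpan (he : e * e = e) (x : eSub K e M) :
    ((x : M), (g x : N)) ∈ graphSpan g := by
  refine Submodule.subset_span ⟨e, x, Prod.ext ?_ ?_⟩
  · exact (idem_smul_of_mem_eSub he x.2).symm
  · exact (idem_smul_of_mem_eSub he (g x).2).symm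

theorem idem_smul_snd_of_mem_graphSpan (he : e * e = e)
    (hg : ∀ (c : corner e he) (x y : eSub K e M),
      (y : M) = (c : A) • (x : M) → (g y : N) = (c : A) • (g x : N))
    {z : M × N} (hz : z ∈ graphSpan g) : e • z.2 = g (eProj K M e z.1) := by
  let L := NUMod.toLinearMap K N e ∘ₗ LinearMap.snd K M N -
    (eSub K e N).subtype ∘ₗ g ∘ₗ eProj K M e ∘ₗ LinearMap.fst K M N
  suffices graphSpan g ≤ LinearMap.ker L from sub_eq_zero.1 (this hz)
  refine Submodule.span_le.2 ?_
  rintro _ ⟨a, x, rfl⟩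
  have hgx := hg (toCorner he a) x (eProj K M e (a • (x : M)))
    (idem_smul_smul_of_mem_eSub he x.2 a)
  simp only [SetLike.mem_coe, LinearMap.mem_ker, L, LinearMap.sub_apply, sub_eq_zero]
  exact (idem_smul_smul_of_mem_eSub he (g x).2 a).trans hgx.symm

theorem map_fst_graphSpan (hM : aeSpan K e M = ⊤) :
    (graphSpan g).map (LinearMap.fst K M N) = ⊤ := by
  rw [eq_top_iff, ← hM, aeSpan, Submodule.span_le]
  rintro _ ⟨a, m, rfl⟩
  exact ⟨_, Submodule.subset_span ⟨a, ⟨e • m, m, rfl⟩, rfl⟩, rfl⟩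

theorem snd_eq_zero_of_mem_graphSpan (he : e * e = e) (hA : Idempotented A)
    (hsp : LeftSpecial K A e) (hMn : Nondeg K A M) (hMs : aeSpan K e M = ⊤)
    (hNn : Nondeg K A N) (hNs : aeSpan K e N = ⊤)
    (hg : ∀ (c : corner e he) (x y : eSub K e M),
      (y : M) = (c : A) • (x : M) → (g y : N) = (c : A) • (g x : N))
    {z : M × N} (hz : z ∈ graphSpan g) (hz₁ : z.1 = 0) : z.2 = 0 := by
  let S := graphSpan g ⊓ LinearMap.ker (LinearMap.fst K M N)
  have hS : AStable K A S := by
    rintro a w ⟨hw, hw₁ : w.1 = 0⟩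
    exact ⟨aStable_graphSpan a w hw, show a • w.1 = 0 by rw [hw₁, asmul_zero K A]⟩
  have hSe : ∀ w ∈ S, e • w = 0 := by
    rintro w ⟨hw, hw₁ : w.1 = 0⟩
    have hw₂ : e • w.2 = 0 := by
      rw [idem_smul_snd_of_mem_graphSpan he hg hw, hw₁, map_zero, map_zero,
        ZeroMemClass.coe_zero]
    exact Prod.ext (show e • w.1 = 0 by rw [hw₁, asmul_zero K A]) hw₂
  have hSbot := hsp.eq_bot_of_forall_smul_eq_zero (nondeg_prod hA hMn hNn)
    (aeSpan_prod hMs hNs) hS hSe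
  have hz0 : z ∈ S := ⟨hz, hz₁⟩
  rw [hSbot, Submodule.mem_bot] at hz0
  rw [hz0, Prod.snd_zero]

theorem existsUnique_isAMap_extension (hA : Idempotented A) (he : e * e = e)
    (hsp : LeftSpecial K A e) (hMn : Nondeg K A M) (hMs : aeSpan K e M = ⊤)
    (hNn : Nondeg K A N) (hNs : aeSpan K e N = ⊤) (g : eSub K e M →ₗ[K] eSub K e N)
    (hg : ∀ (c : corner e he) (x y : eSub K e M),
      (y : M) = (c : A) • (x : M) → (g y : N) = (c : A) • (g x : N)) :
    ∃! f : M →ₗ[K] N, IsAMap K A f ∧ ∀ x : eSub K e M, f x = g x := by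
  obtain ⟨f, hf⟩ := (graphSpan g).exists_linearMap_mem_iff (map_fst_graphSpan hMs)
    fun z hz => snd_eq_zero_of_mem_graphSpan he hA hsp hMn hMs hNn hNs hg hz
  have hfA : IsAMap K A f := fun a m =>
    (hf _ _).1 (aStable_graphSpan a _ ((hf m (f m)).2 rfl))
  have hfg : ∀ x : eSub K e M, f x = g x := fun x => (hf _ _).1 (mk_mem_graphSpan he x)
  refine ⟨f, ⟨hfA, hfg⟩, fun f' ⟨hf'A, hf'g⟩ =>
    IsAMap.ext_of_aeSpan_eq_top hMs hf'A hfA fun x hx => ?_⟩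
  rw [hf'g ⟨x, hx⟩, hfg ⟨x, hx⟩]

end Modules

section Induced

variable {K : Type u} [CommRing K] {A : Type u} [NonUnitalRing A] [Module K A]
  [SMulCommClass K A A] [IsScalarTower K A A]

variable (K) in
def leftIdealMulLeft (e a : A) : leftIdeal K e →ₗ[K] leftIdeal K e :=
  (LinearMap.mulLeft K a).restrict fun _ hx => mul_mem_leftIdeal a hx

variable {e : A} (he : e * e = e) {V : Type u} [AddCommGroup V] [Module K V]
  (μ : corner e he → V →ₗ[K] V)

def inducedRel : Submodule K (leftIdeal K e ⊗[K] V) :=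
  Submodule.span K {z | ∃ (x : leftIdeal K e) (c : corner e he) (v : V),
    z = (⟨x * c, mul_mem_leftIdeal_of_mem_corner he _ c.2⟩ : leftIdeal K e) ⊗ₜ v -
      x ⊗ₜ μ c v}

/-- The induced module `A ⊗_{eAe} V`, realised as `Ae ⊗_{eAe} V` (the two agree because
`eAe` acts on `A` through `e`). -/
abbrev Induced : Type u := (leftIdeal K e ⊗[K] V) ⧸ inducedRel he μ

variable (hmul : ∀ c c' : corner e he, μ (c * c') = μ c ∘ₗ μ c')
  (hadd : ∀ (c c' : corner e he) (v : V), μ (c + c') v = μ c v + μ c' v)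
  (hsmul : ∀ (k : K) (c c' : corner e he), (c' : A) = k • (c : A) →
    ∀ v : V, μ c' v = k • μ c v)

namespace Induced

def mk (x : leftIdeal K e) (v : V) : Induced he μ := (inducedRel he μ).mkQ (x ⊗ₜ v)

theorem mk_mul_corner (x : leftIdeal K e) (c : corner e he) (v : V) :
    mk he μ ⟨x * c, mul_mem_leftIdeal_of_mem_corner he _ c.2⟩ v = mk he μ x (μ c v) := by
  rw [mk, mk, ← sub_eq_zero, ← map_sub, Submodule.mkQ_apply, Submodule.Quotient.mk_eq_zero]
  exact Submodule.subset_span ⟨x, c, v, rfl⟩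

theorem hom_ext {W : Type u} [AddCommGroup W] [Module K W] {f f' : Induced he μ →ₗ[K] W}
    (h : ∀ x v, f (mk he μ x v) = f' (mk he μ x v)) : f = f' :=
  Submodule.linearMap_qext _ (TensorProduct.ext' h)

theorem eq_top_of_forall_mk_mem {S : Submodule K (Induced he μ)}
    (h : ∀ x v, mk he μ x v ∈ S) : S = ⊤ := by
  refine Submodule.eq_top_iff'.2 fun m => ?_
  obtain ⟨t, rfl⟩ := (inducedRel he μ).mkQ_surjective m
  induction t using TensorProduct.induction_on with
  | zero => rw [map_zero]; exact S.zero_mem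
  | tmul x v => exact h x v
  | add s t hs ht => rw [map_add]; exact S.add_mem hs ht

theorem inducedRel_le_comap (a : A) :
    inducedRel he μ ≤ (inducedRel he μ).comap ((leftIdealMulLeft K e a).rTensor V) := by
  refine Submodule.span_le.2 ?_
  rintro _ ⟨x, c, v, rfl⟩
  refine Submodule.subset_span ⟨leftIdealMulLeft K e a x, c, v, ?_⟩
  rw [map_sub, LinearMap.rTensor_tmul, LinearMap.rTensor_tmul]
  congr 2
  exact Subtype.ext (mul_assoc a x c).symm

def act (a : A) : Induced he μ →ₗ[K] Induced he μ :=
  Submodule.mapQ _ _ ((leftIdealMulLeft K e a).rTensor V) (inducedRel_le_comap he μ a)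

theorem act_mk (a : A) (x : leftIdeal K e) (v : V) :
    act he μ a (mk he μ x v) = mk he μ (leftIdealMulLeft K e a x) v :=
  rfl

theorem act_add (a b : A) : act he μ (a + b) = act he μ a + act he μ b := by
  refine hom_ext he μ fun x v => ?_
  rw [LinearMap.add_apply, act_mk, act_mk, act_mk, mk, mk, mk, ← map_add,
    ← TensorProduct.add_tmul]
  congr 2
  exact Subtype.ext (add_mul a b x)

theorem act_mul (a b : A) : act he μ (a * b) = act he μ a ∘ₗ act he μ b :=
  hom_ext he μ fun x v => by
    rw [LinearMap.comp_apply, act_mk, act_mk, act_mk]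
    congr 1
    exact Subtype.ext (mul_assoc a b x)

theorem act_smul (k : K) (a : A) : act he μ (k • a) = k • act he μ a := by
  refine hom_ext he μ fun x v => ?_
  rw [LinearMap.smul_apply, act_mk, act_mk, mk, mk, ← map_smul, TensorProduct.smul_tmul']
  congr 2
  exact Subtype.ext (smul_mul_assoc k a x)

instance : NUMod K A (Induced he μ) where
  smul a m := act he μ a m
  asmul_add a := (act he μ a).map_add
  add_asmul a b m := LinearMap.congr_fun (act_add he μ a b) m
  mul_asmul a b m := LinearMap.congr_fun (act_mul he μ a b) m
  asmul_ksmul k a := (act he μ a).map_smul k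
  ksmul_asmul k a m := LinearMap.congr_fun (act_smul he μ k a) m

theorem smul_mk (a : A) (x : leftIdeal K e) (v : V) :
    a • mk he μ x v = mk he μ (leftIdealMulLeft K e a x) v :=
  rfl

def incl : V →ₗ[K] Induced he μ :=
  (inducedRel he μ).mkQ ∘ₗ TensorProduct.mk K (leftIdeal K e) V ⟨e, e, he⟩

theorem incl_apply (v : V) : incl he μ v = mk he μ ⟨e, e, he⟩ v :=
  rfl

theorem incl_mem_eSub (v : V) : incl he μ v ∈ eSub K e (Induced he μ) :=
  ⟨incl he μ v, by rw [incl_apply, smul_mk]; exact congrArg (mk he μ · v) (Subtype.ext he)⟩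

def evalBilin : leftIdeal K e →ₗ[K] V →ₗ[K] V :=
  LinearMap.mk₂ K (fun x v => μ (toCorner he x) v)
    (fun x y v => by rw [Submodule.coe_add, toCorner_add, hadd])
    (fun k x v => hsmul k _ _ (by simp only [toCorner, SetLike.val_smul, mul_smul_comm,
      smul_mul_assoc]) v)
    (fun x => (μ _).map_add) (fun k x => (μ _).map_smul k)

include hmul in
theorem inducedRel_le_ker : inducedRel he μ ≤
    LinearMap.ker (TensorProduct.lift (evalBilin he μ hadd hsmul)) := by
  refine Submodule.span_le.2 ?_
  rintro _ ⟨x, c, v, rfl⟩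
  have hxc : toCorner he (x * c) = toCorner he x * c := Subtype.ext (by
    show e * (x * c) * e = e * x * e * c
    simp only [mul_assoc, mul_idem_of_mem_corner he c.2, idem_mul_of_mem_corner he c.2])
  simp only [SetLike.mem_coe, LinearMap.mem_ker, map_sub, TensorProduct.lift.tmul,
    evalBilin, LinearMap.mk₂_apply, hxc, hmul, LinearMap.comp_apply, sub_self]

def eval : Induced he μ →ₗ[K] V :=
  (inducedRel he μ).liftQ _ (inducedRel_le_ker he μ hmul hadd hsmul)

theorem eval_mk (x : leftIdeal K e) (v : V) :
    eval he μ hmul hadd hsmul (mk he μ x v) = μ (toCorner he x) v :=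
  rfl

theorem eval_incl (hid : μ ⟨e, e_mem_corner e he⟩ = LinearMap.id) (v : V) :
    eval he μ hmul hadd hsmul (incl he μ v) = v := by
  have he' : toCorner he e = ⟨e, e_mem_corner e he⟩ := Subtype.ext (by simp only [toCorner, he])
  rw [incl_apply, eval_mk, he', hid, LinearMap.id_apply]

theorem idem_smul_eq_incl_eval (m : Induced he μ) :
    e • m = incl he μ (eval he μ hmul hadd hsmul m) := by
  refine LinearMap.congr_fun (hom_ext he μ (f := act he μ e)
    (f' := incl he μ ∘ₗ eval he μ hmul hadd hsmul) fun x v => ?_) m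
  rw [LinearMap.comp_apply, eval_mk, incl_apply, ← mk_mul_corner, act_mk]
  congr 1
  exact Subtype.ext (by
    show e * x = e * (e * x * e)
    rw [mul_idem_of_mem_leftIdeal he (mul_mem_leftIdeal e x.2), ← mul_assoc, he])

theorem eval_smul_of_mem_corner (c : corner e he) (m : Induced he μ) :
    eval he μ hmul hadd hsmul ((c : A) • m) = μ c (eval he μ hmul hadd hsmul m) := by
  refine LinearMap.congr_fun (hom_ext he μ (f := eval he μ hmul hadd hsmul ∘ₗ act he μ c)
    (f' := μ c ∘ₗ eval he μ hmul hadd hsmul) fun x v => ?_) m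
  have hcx : toCorner he (c * x) = c * toCorner he x := Subtype.ext (by
    show e * (c * x) * e = c * (e * x * e)
    rw [← mul_assoc, idem_mul_of_mem_corner he c.2, ← mul_assoc (c : A) (e * x) e,
      ← mul_assoc (c : A) e x, mul_idem_of_mem_corner he c.2])
  rw [LinearMap.comp_apply, LinearMap.comp_apply, act_mk, eval_mk, eval_mk]
  exact (congrArg (μ · v) hcx).trans (LinearMap.congr_fun (hmul c _) v)

theorem nondeg (hA : Idempotented A) : Nondeg K A (Induced he μ) := by
  rw [nondeg_iff_idemFixed_eq_top hA]
  refine eq_top_of_forall_mk_mem he μ fun x v => ?_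
  obtain ⟨b, hb⟩ := x.2
  obtain ⟨f, hf, hfb, -⟩ := hA.1 b
  refine ⟨f, hf, congrArg (mk he μ · v) (Subtype.ext ?_)⟩
  show f * x = x
  rw [← hb, ← mul_assoc, hfb]

theorem aeSpan_eq_top : aeSpan K e (Induced he μ) = ⊤ := by
  refine eq_top_of_forall_mk_mem he μ fun x v => Submodule.subset_span ?_
  obtain ⟨b, hb⟩ := x.2
  refine ⟨b, incl he μ v, ?_⟩
  rw [idem_smul_of_mem_eSub he (incl_mem_eSub he μ v), incl_apply, smul_mk]
  exact congrArg (mk he μ · v) (Subtype.ext hb)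

def eSubEquiv (hid : μ ⟨e, e_mem_corner e he⟩ = LinearMap.id) :
    eSub K e (Induced he μ) ≃ₗ[K] V where
  toLinearMap := eval he μ hmul hadd hsmul ∘ₗ (eSub K e (Induced he μ)).subtype
  invFun v := ⟨incl he μ v, incl_mem_eSub he μ v⟩
  left_inv m := Subtype.ext <| by
    show incl he μ (eval he μ hmul hadd hsmul m) = m
    rw [← idem_smul_eq_incl_eval, idem_smul_of_mem_eSub he m.2]
  right_inv := eval_incl he μ hmul hadd hsmul hid

end Induced

include hmul hadd hsmul in
theorem exists_eSub_equiv (hA : Idempotented A)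
    (hid : μ ⟨e, e_mem_corner e he⟩ = LinearMap.id) :
    ∃ M : ModBundle K A, Nondeg K A M.carrier ∧ aeSpan K e M.carrier = ⊤ ∧
      ∃ g : eSub K e M.carrier ≃ₗ[K] V,
        ∀ (c : corner e he) (x y : eSub K e M.carrier),
          (y : M.carrier) = (c : A) • (x : M.carrier) → g y = μ c (g x) :=
  ⟨⟨Induced he μ⟩, Induced.nondeg he μ hA, Induced.aeSpan_eq_top he μ,
    Induced.eSubEquiv he μ hmul hadd hsmul hid, fun c x y hy => by
      show Induced.eval he μ hmul hadd hsmul y = μ c (Induced.eval he μ hmul hadd hsmul x)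
      rw [hy, Induced.eval_smul_of_mem_corner]⟩

end Induced

/-- for a left special idempotent `e` of an idempotented algebra `A`, the
functor `Hom_A(Ae, −) ≅ (M ↦ eM)` is an equivalence of categories from
`M(A)_e = {M | M = AeM}` to the category of unital `eAe`-modules, with quasi-inverse
`A ⊗_{eAe} (−)`.  This is expressed by: (full faithfulness) for `M, N ∈ M(A)_e`, every
`eAe`-linear map `eM → eN` extends uniquely to an `A`-linear map `M → N`; and
(essential surjectivity) every unital `eAe`-module `V` (given by an action `μ` of the
corner ring `eAe` on `V`) is isomorphic, `eAe`-equivariantly, to `eM` for some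
`M ∈ M(A)_e`. -/
theorem eM_functor_equivalence
    {K A : Type u} [CommRing K] [NonUnitalRing A] [Module K A]
    [SMulCommClass K A A] [IsScalarTower K A A]
    (hA : Idempotented A) (e : A) (he : e * e = e) (hsp : LeftSpecial K A e) :
    -- Hom_A(Ae, −) = eM is fully faithful on M(A)_e
    (∀ (M N : Type u) [AddCommGroup M] [Module K M] [NUMod K A M]
        [AddCommGroup N] [Module K N] [NUMod K A N],
      Nondeg K A M → aeSpan K e M = ⊤ → Nondeg K A N → aeSpan K e N = ⊤ →
      ∀ g : ↥(eSub K e M) →ₗ[K] ↥(eSub K e N),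
        (∀ (c : ↥(corner e he)) (x y : ↥(eSub K e M)),
          (y : M) = (c : A) • (x : M) → ((g y : N)) = (c : A) • ((g x : N))) →
        ∃! f : M →ₗ[K] N, IsAMap K A f ∧ ∀ x : ↥(eSub K e M), f ↑x = ↑(g x)) ∧
    -- Hom_A(Ae, −) is essentially surjective onto M(eAe)
    (∀ (V : Type u) [AddCommGroup V] [Module K V],
      ∀ μ : ↥(corner e he) → V →ₗ[K] V,
        (∀ c c' : ↥(corner e he), μ (c * c') = μ c ∘ₗ μ c') →
        (∀ (c c' : ↥(corner e he)) (v : V), μ (c + c') v = μ c v + μ c' v) →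
        (μ ⟨e, e_mem_corner e he⟩ = LinearMap.id) →
        (∀ (k : K) (c c' : ↥(corner e he)), (c' : A) = k • (c : A) →
          ∀ v : V, μ c' v = k • μ c v) →
        ∃ M : ModBundle K A, Nondeg K A M.carrier ∧ aeSpan K e M.carrier = ⊤ ∧
          ∃ g : ↥(eSub K e M.carrier) ≃ₗ[K] V,
            ∀ (c : ↥(corner e he)) (x y : ↥(eSub K e M.carrier)),
              (y : M.carrier) = (c : A) • (x : M.carrier) → g y = μ c (g x)) := by
  exact ⟨fun M N _ _ _ _ _ _ hMn hMs hNn hNs g hg =>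
      existsUnique_isAMap_extension hA he hsp hMn hMs hNn hNs g hg,
    fun V _ _ μ hmul hadd hid hsmul => exists_eSub_equiv he μ hmul hadd hsmul hA hid⟩
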